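/- Let X = [[-1,-1],[0,-1]] and Y = [[0,-1],[0,0]] in M₂(ℝ). Define the arithmetic symmetric modulus |Z|_sym = (|Z| + |Z*|)/2. Then ‖|X+Y|_sym‖_∞ = 3/√2 > 7/(2√5) + 1/2 = ‖|X|_sym‖_∞ + ‖|Y|_sym‖_∞, where ‖·‖_∞ is the operator norm. Consequently there exist no unitaries U, V ∈ M₂(ℂ) with |X+Y|_sym ≤ U|X|_sym U* + V|Y|_sym V*. -/

import Mathlib

open Matrix ComplexOrder

/-- `|X| = (XᴴX)^{1/2}`. -/
noncomputable def absM {m n : ℕ} (X : Matrix (Fin m) (Fin n) ℂ) : Matrix (Fin n) (Fin n) ℂ :=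
  (Matrix.posSemidef_conjTranspose_mul_self X).1.eigenvectorUnitary.1 *
    diagonal ((↑) ∘ (Real.sqrt ·) ∘ (Matrix.posSemidef_conjTranspose_mul_self X).1.eigenvalues) *
    (star (Matrix.posSemidef_conjTranspose_mul_self X).1.eigenvectorUnitary : Matrix (Fin n) (Fin n) ℂ)

/-- The arithmetic symmetric modulus `|Z|_sym = (|Z| + |Zᴴ|)/2`. -/
noncomputable def symMod {n : ℕ} (Z : Matrix (Fin n) (Fin n) ℂ) : Matrix (Fin n) (Fin n) ℂ :=
  ((2:ℂ)⁻¹) • (absM Z + absM Zᴴ)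

/-- The ℓ²-operator norm of a 2×2 complex matrix. -/
noncomputable def opN (M : Matrix (Fin 2) (Fin 2) ℂ) : ℝ :=
  ‖Matrix.toEuclideanCLM (𝕜 := ℂ) (n := Fin 2) M‖

/-!
`|Z|` is the unique positive square root of `ZᴴZ`, so each modulus is found by exhibiting a
positive matrix with the right square. The three symmetric moduli are positive multiples of
matrices `[[a, b], [b, a]]` with `a, b ≥ 0`, whose operator norm `a + b` is attained at `(1, 1)`.
If `0 ≤ C ≤ U A U* + V B V*`, monotonicity of the C⋆-norm on positive elements, the triangle
inequality and unitary invariance give `‖C‖ ≤ ‖A‖ + ‖B‖`, which the computed norms violate.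
-/

open scoped Matrix.Norms.L2Operator MatrixOrder

lemma CStarAlgebra.norm_le_add_of_le_unitary_conj {A : Type*} [CStarAlgebra A] [PartialOrder A]
    [StarOrderedRing A] {a b c u v : A} (hu : u ∈ unitary A) (hv : v ∈ unitary A) (hc : 0 ≤ c)
    (h : c ≤ u * a * star u + v * b * star v) : ‖c‖ ≤ ‖a‖ + ‖b‖ :=
  calc ‖c‖ ≤ ‖u * a * star u + v * b * star v‖ := norm_le_norm_of_nonneg_of_le hc h
    _ ≤ ‖u * a * star u‖ + ‖v * b * star v‖ := norm_add_le _ _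
    _ = ‖a‖ + ‖b‖ := by
      rw [CStarRing.norm_mul_mem_unitary _ (Unitary.star_mem hu),
        CStarRing.norm_mem_unitary_mul _ hu, CStarRing.norm_mul_mem_unitary _ (Unitary.star_mem hv),
        CStarRing.norm_mem_unitary_mul _ hv]

namespace Matrix

lemma posSemidef_fin_two_of_sq_le_mul {p q r : ℝ} (hp : 0 ≤ p) (hr : 0 ≤ r) (hq : q ^ 2 ≤ p * r) :
    (!![(p : ℂ), q; q, r]).PosSemidef := by
  refine .of_dotProduct_mulVec_nonneg ?_ fun x => ?_
  · ext i j; fin_cases i <;> fin_cases j <;> simp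
  have hform : star x ⬝ᵥ (!![(p : ℂ), q; q, r] *ᵥ x) =
      ((p * ‖x 0‖ ^ 2 + 2 * q * (star (x 0) * x 1).re + r * ‖x 1‖ ^ 2 : ℝ) : ℂ) := by
    simp [dotProduct, mulVec, Fin.sum_univ_two, Complex.ext_iff, Complex.sq_norm,
      Complex.normSq_apply]
    constructor <;> ring
  set u := ‖x 0‖
  set v := ‖x 1‖
  have hcross : |(star (x 0) * x 1).re| ≤ u * v := by
    simpa using Complex.abs_re_le_norm (star (x 0) * x 1)
  have hamgm : 2 * |q| * (u * v) ≤ p * u ^ 2 + r * v ^ 2 := by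
    refine (pow_le_pow_iff_left₀ (by positivity) (by positivity) two_ne_zero).1 ?_
    nlinarith [sq_nonneg (p * u ^ 2 - r * v ^ 2), sq_abs q,
      mul_le_mul_of_nonneg_right hq (sq_nonneg (u * v))]
  have hqcross : |q * (star (x 0) * x 1).re| ≤ |q| * (u * v) := by
    rw [abs_mul]; exact mul_le_mul_of_nonneg_left hcross (abs_nonneg q)
  rw [hform, Complex.zero_le_real]
  linarith [neg_abs_le (q * (star (x 0) * x 1).re)]

lemma norm_le_norm_of_mulVec_eq_smul {n : Type*} [Fintype n] [DecidableEq n] {M : Matrix n n ℂ}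
    {v : n → ℂ} {c : ℂ} (hv : v ≠ 0) (h : M *ᵥ v = c • v) : ‖c‖ ≤ ‖M‖ := by
  have hle := (toEuclideanCLM (𝕜 := ℂ) M).le_opNorm (WithLp.toLp 2 v)
  rw [toEuclideanCLM_toLp, h, WithLp.toLp_smul, norm_smul] at hle
  exact le_of_mul_le_mul_right hle (norm_pos_iff.2 (by simpa using hv))

lemma norm_fin_two_symm {a b : ℝ} (ha : 0 ≤ a) (hb : 0 ≤ b) :
    ‖!![(a : ℂ), b; b, a]‖ = a + b := by
  refine le_antisymm ?_ ?_
  · have hswap : !![(0 : ℂ), 1; 1, 0] ∈ unitary (Matrix (Fin 2) (Fin 2) ℂ) := by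
      rw [Unitary.mem_iff, star_eq_conjTranspose]
      constructor <;> ext i j <;> fin_cases i <;> fin_cases j <;> simp [mul_apply, Fin.sum_univ_two]
    have hdec : !![(a : ℂ), b; b, a] = (a : ℂ) • 1 + (b : ℂ) • !![(0 : ℂ), 1; 1, 0] := by
      ext i j; fin_cases i <;> fin_cases j <;> simp
    calc ‖!![(a : ℂ), b; b, a]‖
        ≤ ‖(a : ℂ)‖ * ‖(1 : Matrix (Fin 2) (Fin 2) ℂ)‖ + ‖(b : ℂ)‖ * 1 := by
          rw [hdec, ← CStarRing.norm_of_mem_unitary hswap, ← norm_smul, ← norm_smul]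
          exact norm_add_le _ _
      _ = a + b := by simp [abs_of_nonneg ha, abs_of_nonneg hb]
  · have hv : ![(1 : ℂ), 1] ≠ 0 := fun h => by simpa using congrFun h 0
    have hle := norm_le_norm_of_mulVec_eq_smul (M := !![(a : ℂ), b; b, a])
      (c := ((a + b : ℝ) : ℂ)) hv (by ext i; fin_cases i <;> simp [mulVec, dotProduct, add_comm])
    rwa [Complex.norm_real, Real.norm_of_nonneg (add_nonneg ha hb)] at hle

end Matrix

open Matrix

lemma absM_eq_cfc_sqrt {m n : ℕ} (X : Matrix (Fin m) (Fin n) ℂ) :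
    absM X = cfc Real.sqrt (Xᴴ * X) := by
  rw [(posSemidef_conjTranspose_mul_self X).1.cfc_eq, IsHermitian.cfc,
    Unitary.conjStarAlgAut_apply]
  rfl

lemma absM_nonneg {m n : ℕ} (X : Matrix (Fin m) (Fin n) ℂ) : 0 ≤ absM X := by
  rw [absM_eq_cfc_sqrt]
  exact cfc_nonneg fun x _ => Real.sqrt_nonneg x

lemma absM_eq_of_mul_self {m n : ℕ} {X : Matrix (Fin m) (Fin n) ℂ}
    {A : Matrix (Fin n) (Fin n) ℂ} (hA : 0 ≤ A) (h : A * A = Xᴴ * X) : absM X = A := by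
  rw [absM_eq_cfc_sqrt, ← cfcₙ_eq_cfc,
    ← CFC.sqrt_eq_real_sqrt _ (posSemidef_conjTranspose_mul_self X).nonneg]
  exact CFC.sqrt_unique h hA

lemma absM_eq_inv_sqrt_smul {m n : ℕ} {X : Matrix (Fin m) (Fin n) ℂ}
    {B : Matrix (Fin n) (Fin n) ℂ} {k : ℝ} (hk : 0 < k) (hB : B.PosSemidef)
    (h : B * B = (k : ℂ) • (Xᴴ * X)) : absM X = ((√k : ℝ) : ℂ)⁻¹ • B := by
  refine absM_eq_of_mul_self (nonneg_iff_posSemidef.2 <|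
    hB.smul (inv_nonneg.2 (Complex.zero_le_real.2 (Real.sqrt_nonneg k)))) ?_
  have hsqrt : ((√k : ℝ) : ℂ) * (√k : ℝ) = k := by
    rw [← Complex.ofReal_mul, Real.mul_self_sqrt hk.le]
  rw [smul_mul_smul_comm, h, smul_smul, ← mul_inv, hsqrt,
    inv_mul_cancel₀ (Complex.ofReal_ne_zero.2 hk.ne'), one_smul]

lemma symMod_nonneg {n : ℕ} (Z : Matrix (Fin n) (Fin n) ℂ) : 0 ≤ symMod Z := by
  rw [symMod, nonneg_iff_posSemidef]
  exact (nonneg_iff_posSemidef.1 (add_nonneg (absM_nonneg Z) (absM_nonneg Zᴴ))).smul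
    (inv_nonneg.2 zero_le_two)

lemma symMod_eq_inv_two_sqrt_smul {n : ℕ} {Z B₁ B₂ : Matrix (Fin n) (Fin n) ℂ} {k : ℝ}
    (hk : 0 < k) (hB₁ : B₁.PosSemidef) (hB₂ : B₂.PosSemidef)
    (h₁ : B₁ * B₁ = (k : ℂ) • (Zᴴ * Z)) (h₂ : B₂ * B₂ = (k : ℂ) • (Z * Zᴴ)) :
    symMod Z = (((2 * √k)⁻¹ : ℝ) : ℂ) • (B₁ + B₂) := by
  rw [symMod, absM_eq_inv_sqrt_smul hk hB₁ h₁,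
    absM_eq_inv_sqrt_smul hk hB₂ (by rwa [conjTranspose_conjTranspose]), ← smul_add, smul_smul]
  push_cast
  rw [mul_inv]

lemma opN_eq_norm (M : Matrix (Fin 2) (Fin 2) ℂ) : opN M = ‖M‖ := rfl

lemma opN_smul_fin_two_symm {M : Matrix (Fin 2) (Fin 2) ℂ} {c a b : ℝ} (hc : 0 ≤ c) (ha : 0 ≤ a)
    (hb : 0 ≤ b) (hM : M = !![(a : ℂ), b; b, a]) : opN ((c : ℂ) • M) = c * (a + b) := by
  rw [opN_eq_norm, norm_smul, hM, norm_fin_two_symm ha hb, Complex.norm_real,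
    Real.norm_of_nonneg hc]

lemma opN_symMod_X : opN (symMod !![(-1 : ℂ), -1; 0, -1]) = 7 / (2 * √5) := by
  have hsym : symMod !![(-1 : ℂ), -1; 0, -1] =
      (((2 * √5)⁻¹ : ℝ) : ℂ) • (!![2, 1; 1, 3] + !![3, 1; 1, 2]) := by
    refine symMod_eq_inv_two_sqrt_smul (by norm_num) ?_ ?_ ?_ ?_
    · simpa using posSemidef_fin_two_of_sq_le_mul (p := 2) (q := 1) (r := 3)
        (by norm_num) (by norm_num) (by norm_num)
    · simpa using posSemidef_fin_two_of_sq_le_mul (p := 3) (q := 1) (r := 2)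
        (by norm_num) (by norm_num) (by norm_num)
    all_goals ext i j; fin_cases i <;> fin_cases j <;>
      simp [mul_apply, vecMul, dotProduct, Fin.sum_univ_two] <;> norm_num
  rw [hsym, opN_smul_fin_two_symm (a := 5) (b := 2) (by positivity) (by norm_num) (by norm_num)
    (by ext i j; fin_cases i <;> fin_cases j <;> norm_num)]
  field_simp
  norm_num

lemma opN_symMod_Y : opN (symMod !![(0 : ℂ), -1; 0, 0]) = 1 / 2 := by
  have hsym : symMod !![(0 : ℂ), -1; 0, 0] =
      (((2 * √1)⁻¹ : ℝ) : ℂ) • (!![0, 0; 0, 1] + !![1, 0; 0, 0]) := by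
    refine symMod_eq_inv_two_sqrt_smul one_pos ?_ ?_ ?_ ?_
    · simpa using posSemidef_fin_two_of_sq_le_mul (p := 0) (q := 0) (r := 1)
        le_rfl zero_le_one (by norm_num)
    · simpa using posSemidef_fin_two_of_sq_le_mul (p := 1) (q := 0) (r := 0)
        zero_le_one le_rfl (by norm_num)
    all_goals ext i j; fin_cases i <;> fin_cases j <;>
      simp [mul_apply, vecMul, dotProduct, Fin.sum_univ_two]
  rw [hsym, opN_smul_fin_two_symm (a := 1) (b := 0) (by positivity) zero_le_one le_rfl
    (by ext i j; fin_cases i <;> fin_cases j <;> norm_num)]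
  norm_num

lemma opN_symMod_X_add_Y :
    opN (symMod (!![(-1 : ℂ), -1; 0, -1] + !![0, -1; 0, 0])) = 3 / √2 := by
  have hsym : symMod (!![(-1 : ℂ), -1; 0, -1] + !![0, -1; 0, 0]) =
      (((2 * √2)⁻¹ : ℝ) : ℂ) • (!![1, 1; 1, 3] + !![3, 1; 1, 1]) := by
    refine symMod_eq_inv_two_sqrt_smul (by norm_num) ?_ ?_ ?_ ?_
    · simpa using posSemidef_fin_two_of_sq_le_mul (p := 1) (q := 1) (r := 3)
        (by norm_num) (by norm_num) (by norm_num)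
    · simpa using posSemidef_fin_two_of_sq_le_mul (p := 3) (q := 1) (r := 1)
        (by norm_num) (by norm_num) (by norm_num)
    all_goals ext i j; fin_cases i <;> fin_cases j <;>
      simp [mul_apply, vecMul, dotProduct, Fin.sum_univ_two] <;> norm_num
  rw [hsym, opN_smul_fin_two_symm (a := 4) (b := 2) (by positivity) (by norm_num) (by norm_num)
    (by ext i j; fin_cases i <;> fin_cases j <;> norm_num)]
  field_simp
  norm_num

lemma seven_div_two_sqrt_five_add_half_lt_three_div_sqrt_two :
    7 / (2 * √5) + 1 / 2 < 3 / √2 := by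
  have h5 : 2.23 < √5 := (Real.lt_sqrt (by norm_num)).2 (by norm_num)
  have h2 : √2 < 1.415 := (Real.sqrt_lt' (by norm_num)).2 (by norm_num)
  have hleft : 7 / (2 * √5) < 7 / (2 * 2.23) := by gcongr
  have hright : 3 / 1.415 < 3 / √2 := by gcongr
  linarith [show (7 : ℝ) / (2 * 2.23) + 1 / 2 < 3 / 1.415 by norm_num]

/-- Thompson's inequality fails for the arithmetic symmetric modulus: with
`X = [[-1,-1],[0,-1]]`, `Y = [[0,-1],[0,0]]`, the operator norms obstruct it. -/
theorem sym_modulus_thompson_fails :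
    let X : Matrix (Fin 2) (Fin 2) ℂ := !![-1, -1; 0, -1]
    let Y : Matrix (Fin 2) (Fin 2) ℂ := !![0, -1; 0, 0]
    opN (symMod (X + Y)) = 3 / Real.sqrt 2 ∧
    opN (symMod X) = 7 / (2 * Real.sqrt 5) ∧
    opN (symMod Y) = 1 / 2 ∧
    3 / Real.sqrt 2 > 7 / (2 * Real.sqrt 5) + 1 / 2 ∧
    ¬ ∃ U V : Matrix (Fin 2) (Fin 2) ℂ,
        Uᴴ * U = 1 ∧ U * Uᴴ = 1 ∧ Vᴴ * V = 1 ∧ V * Vᴴ = 1 ∧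
        (U * symMod X * Uᴴ + V * symMod Y * Vᴴ - symMod (X + Y)).PosSemidef := by
  intro X Y
  refine ⟨opN_symMod_X_add_Y, opN_symMod_X, opN_symMod_Y,
    seven_div_two_sqrt_five_add_half_lt_three_div_sqrt_two, ?_⟩
  rintro ⟨U, V, hU₁, hU₂, hV₁, hV₂, hle⟩
  have hnorm : opN (symMod (X + Y)) ≤ opN (symMod X) + opN (symMod Y) := by
    simp only [opN_eq_norm]
    exact CStarAlgebra.norm_le_add_of_le_unitary_conj (Unitary.mem_iff.2 ⟨hU₁, hU₂⟩)
      (Unitary.mem_iff.2 ⟨hV₁, hV₂⟩) (symMod_nonneg (X + Y)) (le_iff.2 hle)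
  rw [opN_symMod_X_add_Y, opN_symMod_X, opN_symMod_Y] at hnorm
  linarith [seven_div_two_sqrt_five_add_half_lt_three_div_sqrt_two]
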